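/- arXiv:math/0605045 — 2 statements merged into one kernel-verified Lean document; each statement's English description precedes it below -/
import Mathlib

section
/- For every λ ∈ h and every x ∈ a, |G_λ(x)| ≤ G_{Re λ}(x), where Re λ ∈ a denotes the real part of λ and G_{Re λ} is the (real, positive) Opdam function with parameter Re λ. -/
open scoped BigOperators RealInnerProductSpace Classical

noncomputable section

variable {E : Type*} [NormedAddCommGroup E] [InnerProductSpace ℝ E] [FiniteDimensional ℝ E]

/-- The coroot `α∨ = 2α/|α|²`. -/
def coroot (α : E) : E := (2 / ⟪α, α⟫) • α

/-- The orthogonal reflection `r_α x = x - (α∨, x) α`. -/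
def rRefl (α : E) (x : E) : E := x - ⟪coroot α, x⟫ • α

/-- Data of an integral root system with positive subsystem and
a Weyl-invariant positive multiplicity function. -/
structure HOData (E : Type*) [NormedAddCommGroup E] [InnerProductSpace ℝ E] : Type _ where
  R : Finset E
  Rpos : Finset E
  k : E → ℝ
  k_pos : ∀ α ∈ R, 0 < k α
  root_ne_zero : ∀ α ∈ R, α ≠ 0
  pos_subset : Rpos ⊆ R
  pos_char : ∃ u : E, ∀ α ∈ R, (α ∈ Rpos ↔ 0 < ⟪α, u⟫)
  pos_or_neg : ∀ α ∈ R, α ∈ Rpos ∨ -α ∈ Rpos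
  neg_mem : ∀ α ∈ R, -α ∈ R
  integral : ∀ α ∈ R, ∀ β ∈ R, ∃ n : ℤ, ⟪coroot α, β⟫ = (n : ℝ)
  refl_mem : ∀ α ∈ R, ∀ β ∈ R, rRefl α β ∈ R
  k_inv : ∀ α ∈ R, ∀ β ∈ R, k (rRefl α β) = k β

/-- The Weyl group: the subgroup of linear isometries generated by the root reflections. -/
def weylGroup (D : HOData E) : Subgroup (E ≃ₗᵢ[ℝ] E) :=
  Subgroup.closure {w : E ≃ₗᵢ[ℝ] E | ∃ α ∈ D.R, ∀ x, w x = rRefl α x}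

/-- `ρ = (1/2) Σ_{α ∈ R⁺} k_α α`. -/
def rhoHO (D : HOData E) : E := (2:ℝ)⁻¹ • ∑ α ∈ D.Rpos, D.k α • α

/-- Regular points. -/
def HORegular (D : HOData E) (x : E) : Prop := ∀ α ∈ D.R, ⟪α, x⟫ ≠ 0

/-- The (open) positive Weyl chamber. -/
def posChamber (D : HOData E) : Set E := {x | ∀ α ∈ D.Rpos, 0 < ⟪α, x⟫}

/-- The positive indivisible roots `R₀⁺`. -/
def Rpos0 (D : HOData E) : Finset E := D.Rpos.filter (fun α => (2:ℝ)⁻¹ • α ∉ D.R)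

/-- The Opdam function `G_λ` for a real parameter `λ`: an analytic function,
normalized at `0`, satisfying the Cherednik differential-difference system. -/
def IsOpdamR (D : HOData E) (lam : E) (G : E → ℝ) : Prop :=
  AnalyticOnNhd ℝ G Set.univ ∧ G 0 = 1 ∧
  ∀ ξ x, HORegular D x →
    fderiv ℝ G x ξ =
      (∑ α ∈ D.Rpos, D.k α * ⟪α, ξ⟫ / (1 - Real.exp (-⟪α, x⟫)) * (G (rRefl α x) - G x))
      + ⟪rhoHO D + lam, ξ⟫ * G x

/-- The Opdam function `G_λ` for a complex parameter `λ = l1 + i l2 ∈ h`. -/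
def IsOpdamC (D : HOData E) (l1 l2 : E) (G : E → ℂ) : Prop :=
  AnalyticOnNhd ℝ G Set.univ ∧ G 0 = 1 ∧
  ∀ ξ x, HORegular D x →
    fderiv ℝ G x ξ =
      (∑ α ∈ D.Rpos, ((D.k α * ⟪α, ξ⟫ / (1 - Real.exp (-⟪α, x⟫)) : ℝ) : ℂ)
          * (G (rRefl α x) - G x))
      + (((⟪rhoHO D + l1, ξ⟫ : ℝ) : ℂ) + Complex.I * ((⟪l2, ξ⟫ : ℝ) : ℂ)) * G x

/-- The symmetrization `F(x) = |W|⁻¹ Σ_{w ∈ W} G(w x)` (real valued case). -/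
def Fsym (D : HOData E) [Fintype (weylGroup D)] (G : E → ℝ) (x : E) : ℝ :=
  (Fintype.card (weylGroup D) : ℝ)⁻¹ * ∑ w : weylGroup D, G (w.1 x)

/-- The symmetrization `F(x) = |W|⁻¹ Σ_{w ∈ W} G(w x)` (complex valued case). -/
def FsymC (D : HOData E) [Fintype (weylGroup D)] (G : E → ℂ) (x : E) : ℂ :=
  (Fintype.card (weylGroup D) : ℂ)⁻¹ * ∑ w : weylGroup D, G (w.1 x)

/-- `max_{w ∈ W} (w λ, x)`. -/
def maxW (D : HOData E) [Fintype (weylGroup D)] (lam x : E) : ℝ :=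
  ⨆ w : weylGroup D, ⟪w.1 lam, x⟫

/-!
Along a ray `t ↦ t • y` the Cherednik system becomes a linear system of ODEs on `(0, 1)` for the
functions `u_y(t) = G_λ(t y)`, `y` running over a finite reflection-stable set of regular points:
`u_y' = Σ_α c_α(y, t) (u_{r_α y} - u_y) + (m_y + i n_y) u_y` with
`c_α(y, t) = k_α (α, y) / (1 - e^{-t (α, y)}) ≥ 0`, `m_y = (ρ + Re λ, y)`, `n_y = (Im λ, y)`, and
`v_y(t) = G_{Re λ}(t y)` solves the same system with `n = 0`. As the coupling coefficients are
nonnegative and `i n_y` only rotates, the defect `max_y (|u_y| - v_y)⁺` has right Dini derivative at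
most a constant times itself; it vanishes at `t = 0`, so by Grönwall it vanishes at `t = 1`. Regular
points are dense and both sides are continuous, which gives the inequality everywhere.
-/

open Filter Set Topology Complex

theorem nonpos_of_liminf_slope_right_le_mul {f : ℝ → ℝ} {K : ℝ}
    (hf : ContinuousOn f (Icc 0 1)) (hf0 : f 0 ≤ 0)
    (hslope : ∀ t ∈ Ioo (0 : ℝ) 1, ∀ r, K * f t < r →
      ∃ᶠ z in 𝓝[>] t, (z - t)⁻¹ * (f z - f t) < r) :
    f 1 ≤ 0 := by
  have hbound : ∀ a ∈ Ioo (0 : ℝ) 1, f 1 ≤ f a * Real.exp (K * (1 - a)) := by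
    intro a ha
    have := le_gronwallBound_of_liminf_deriv_right_le (hf.mono (Icc_subset_Icc_left ha.1.le))
      (fun t ht r hr => hslope t ⟨ha.1.trans_le ht.1, ht.2⟩ r hr) le_rfl
      (fun t _ => (add_zero (K * f t)).ge) 1 ⟨ha.2.le, le_rfl⟩
    rwa [gronwallBound_ε0] at this
  have hf_right : Tendsto f (𝓝[>] 0) (𝓝 (f 0)) := by
    refine (hf 0 ⟨le_rfl, zero_le_one⟩).tendsto.mono_left ?_
    rw [nhdsWithin_Icc_eq_nhdsGE zero_lt_one]
    exact nhdsWithin_mono _ Ioi_subset_Ici_self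
  have hexp : Continuous fun a => Real.exp (K * (1 - a)) := by fun_prop
  have hlim := hf_right.mul ((hexp.tendsto 0).mono_left nhdsWithin_le_nhds)
  refine le_of_tendsto_of_tendsto tendsto_const_nhds hlim ?_ |>.trans ?_
  · filter_upwards [Ioo_mem_nhdsGT zero_lt_one] with a ha using hbound a ha
  · exact mul_nonpos_of_nonpos_of_nonneg hf0 (Real.exp_pos _).le

theorem eventually_norm_sub_lt_of_hasDerivAt {W : Type*} [NormedAddCommGroup W] [NormedSpace ℝ W]
    {u : ℝ → W} {v : ℝ → ℝ} {u' : W} {v' t F B C r : ℝ}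
    (hu : HasDerivAt u u' t) (hv : HasDerivAt v v' t) (hr : B < r)
    (hstep : ∀ᶠ z in 𝓝[>] t,
      ‖u t + (z - t) • u'‖ - (v t + (z - t) * v') ≤ F + (z - t) * B + (z - t) ^ 2 * C) :
    ∀ᶠ z in 𝓝[>] t, ‖u z‖ - v z < F + (z - t) * r := by
  set ε := (r - B) / 3 with hε
  have hε_pos : 0 < ε := by rw [hε]; linarith
  have hCε : ∀ᶠ z in 𝓝[>] t, (z - t) * C < ε := by
    have : Tendsto (fun z => (z - t) * C) (𝓝 t) (𝓝 ((t - t) * C)) :=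
      ((continuous_sub_right t).mul continuous_const).tendsto t
    rw [sub_self, zero_mul] at this
    exact (this.mono_left nhdsWithin_le_nhds).eventually_lt_const hε_pos
  filter_upwards [self_mem_nhdsWithin, hstep, hCε,
    nhdsWithin_le_nhds (hu.isLittleO.def hε_pos), nhdsWithin_le_nhds (hv.isLittleO.def hε_pos)]
    with z (hz : t < z) hstep hCε hu hv
  have hh : 0 < z - t := sub_pos.mpr hz
  rw [Real.norm_of_nonneg hh.le] at hu hv
  have hu' : ‖u z‖ ≤ ‖u t + (z - t) • u'‖ + ε * (z - t) := by
    calc ‖u z‖ = ‖(u t + (z - t) • u') + (u z - u t - (z - t) • u')‖ := by congr 1; abel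
      _ ≤ _ := (norm_add_le _ _).trans (by gcongr)
  have hv' : v t + (z - t) * v' - ε * (z - t) ≤ v z := by
    rw [smul_eq_mul] at hv
    linarith [neg_abs_le (v z - v t - (z - t) * v'), Real.norm_eq_abs (v z - v t - (z - t) * v')]
  have hquad : (z - t) ^ 2 * C < ε * (z - t) := by
    rw [sq, mul_assoc, mul_comm ε]; exact mul_lt_mul_of_pos_left hCε hh
  have hr' : (z - t) * r = (z - t) * B + 3 * (ε * (z - t)) := by rw [hε]; ring
  linarith

theorem norm_ofReal_add_I_mul_le {a b : ℝ} (ha : 1 / 2 ≤ a) : ‖(a : ℂ) + I * b‖ ≤ a + b ^ 2 := by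
  rw [mul_comm, norm_add_mul_I]
  refine Real.sqrt_le_iff.mpr ⟨by positivity, ?_⟩
  nlinarith [sq_nonneg b]

theorem norm_euler_step_sub_le {α : Type*} (A : Finset α) {c : α → ℝ} (hc : ∀ a ∈ A, 0 ≤ c a)
    {u : ℂ} {uA : α → ℂ} {v : ℝ} {vA : α → ℝ} {m n f h : ℝ}
    (hφ : ‖u‖ - v ≤ f) (hφA : ∀ a ∈ A, ‖uA a‖ - vA a ≤ f) (hh : 0 ≤ h)
    (hcoef : 1 / 2 ≤ 1 - h * ∑ a ∈ A, c a + h * m) :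
    ‖u + h • (∑ a ∈ A, (c a : ℂ) * (uA a - u) + ((m : ℂ) + I * n) * u)‖
        - (v + h * (∑ a ∈ A, c a * (vA a - v) + m * v))
      ≤ (1 + h * m) * f + (h * n) ^ 2 * ‖u‖ := by
  set S := ∑ a ∈ A, c a
  set a₀ := 1 - h * S + h * m
  have hu_step : u + h • (∑ a ∈ A, (c a : ℂ) * (uA a - u) + ((m : ℂ) + I * n) * u)
      = ((a₀ : ℂ) + I * (h * n : ℝ)) * u + ∑ a ∈ A, ((h * c a : ℝ) : ℂ) * uA a := by
    have hsum : ∑ a ∈ A, (c a : ℂ) * (uA a - u) = ∑ a ∈ A, (c a : ℂ) * uA a - (S : ℂ) * u := by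
      simp only [S, mul_sub, Finset.sum_sub_distrib, Finset.sum_mul, ofReal_sum]
    have hsum' : ∑ a ∈ A, ((h * c a : ℝ) : ℂ) * uA a = h * ∑ a ∈ A, (c a : ℂ) * uA a := by
      simp only [Finset.mul_sum, ofReal_mul, mul_assoc]
    rw [hsum, hsum', real_smul]
    push_cast [a₀]
    ring
  have hv_step : v + h * (∑ a ∈ A, c a * (vA a - v) + m * v)
      = a₀ * v + ∑ a ∈ A, h * c a * vA a := by
    have hsum : ∑ a ∈ A, c a * (vA a - v) = ∑ a ∈ A, c a * vA a - S * v := by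
      simp only [S, mul_sub, Finset.sum_sub_distrib, Finset.sum_mul]
    simp only [hsum, mul_assoc, ← Finset.mul_sum, a₀]
    ring
  have hnorm_sum : ‖∑ a ∈ A, ((h * c a : ℝ) : ℂ) * uA a‖ ≤ ∑ a ∈ A, h * c a * ‖uA a‖ := by
    refine (norm_sum_le _ _).trans (Finset.sum_le_sum fun a ha => ?_)
    rw [norm_mul, norm_real, Real.norm_of_nonneg (mul_nonneg hh (hc a ha))]
  have hcoupling : ∑ a ∈ A, h * c a * ‖uA a‖ - ∑ a ∈ A, h * c a * vA a ≤ h * S * f := by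
    rw [← Finset.sum_sub_distrib, mul_assoc, Finset.sum_mul, Finset.mul_sum]
    refine Finset.sum_le_sum fun a ha => ?_
    have := mul_le_mul_of_nonneg_left (hφA a ha) (mul_nonneg hh (hc a ha))
    linarith
  have hdiag : a₀ * ‖u‖ - a₀ * v ≤ a₀ * f := by
    rw [← mul_sub]; exact mul_le_mul_of_nonneg_left hφ (by linarith)
  have hnorm_diag : ‖((a₀ : ℂ) + I * (h * n : ℝ)) * u‖ ≤ (a₀ + (h * n) ^ 2) * ‖u‖ := by
    rw [norm_mul]; gcongr; exact norm_ofReal_add_I_mul_le hcoef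
  rw [hu_step, hv_step]
  calc _ ≤ (a₀ + (h * n) ^ 2) * ‖u‖ + ∑ a ∈ A, h * c a * ‖uA a‖
          - (a₀ * v + ∑ a ∈ A, h * c a * vA a) := by
        gcongr
        exact (norm_add_le _ _).trans (add_le_add hnorm_diag hnorm_sum)
    _ ≤ a₀ * f + h * S * f + (h * n) ^ 2 * ‖u‖ := by linarith
    _ = (1 + h * m) * f + (h * n) ^ 2 * ‖u‖ := by ring

theorem norm_le_of_hasDerivAt_system {ι α : Type*} {O : Finset ι} {A : Finset α}
    {σ : α → ι → ι} (hσ : ∀ a ∈ A, ∀ i ∈ O, σ a i ∈ O)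
    {u : ι → ℝ → ℂ} {v : ι → ℝ → ℝ} {c : ι → α → ℝ → ℝ} {m n : ι → ℝ}
    (hc : ∀ i ∈ O, ∀ a ∈ A, ∀ t ∈ Ioo (0 : ℝ) 1, 0 ≤ c i a t)
    (h0 : ∀ i ∈ O, ‖u i 0‖ ≤ v i 0)
    (hu : ∀ i ∈ O, ContinuousOn (u i) (Icc 0 1)) (hv : ∀ i ∈ O, ContinuousOn (v i) (Icc 0 1))
    (hu' : ∀ i ∈ O, ∀ t ∈ Ioo (0 : ℝ) 1, HasDerivAt (u i)
      (∑ a ∈ A, (c i a t : ℂ) * (u (σ a i) t - u i t) + ((m i : ℂ) + I * n i) * u i t) t)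
    (hv' : ∀ i ∈ O, ∀ t ∈ Ioo (0 : ℝ) 1, HasDerivAt (v i)
      (∑ a ∈ A, c i a t * (v (σ a i) t - v i t) + m i * v i t) t) :
    ∀ i ∈ O, ‖u i 1‖ ≤ v i 1 := by
  obtain rfl | hO := O.eq_empty_or_nonempty
  · simp
  set φ : ι → ℝ → ℝ := fun i t => ‖u i t‖ - v i t
  set f : ℝ → ℝ := fun t => max (O.sup' hO fun i => φ i t) 0
  set K := ∑ i ∈ O, |m i|
  have hφf : ∀ i ∈ O, ∀ t, φ i t ≤ f t := fun i hi t =>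
    (Finset.le_sup' (fun i => φ i t) hi).trans (le_max_left _ _)
  have hf_nonneg : ∀ t, 0 ≤ f t := fun t => le_max_right _ _
  have hmK : ∀ i ∈ O, m i ≤ K := fun i hi =>
    (le_abs_self _).trans (Finset.single_le_sum (fun j _ => abs_nonneg (m j)) hi)
  have hf_cont : ContinuousOn f (Icc 0 1) := ContinuousOn.sup
    (ContinuousOn.finset_sup'_apply hO fun i hi => (hu i hi).norm.sub (hv i hi))
    continuousOn_const
  have hf0 : f 0 ≤ 0 :=
    max_le (Finset.sup'_le hO _ fun i hi => sub_nonpos.mpr (h0 i hi)) le_rfl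
  suffices hf1 : f 1 ≤ 0 from fun i hi => sub_nonpos.mp ((hφf i hi 1).trans hf1)
  refine nonpos_of_liminf_slope_right_le_mul (K := K) hf_cont hf0 fun t ht r hr => ?_
  have hφ_step : ∀ i ∈ O, ∀ᶠ z in 𝓝[>] t, φ i z < f t + (z - t) * r := by
    intro i hi
    refine eventually_norm_sub_lt_of_hasDerivAt (hu' i hi t ht) (hv' i hi t ht) hr
      (C := n i ^ 2 * ‖u i t‖) ?_
    have hcoef : ∀ᶠ z in 𝓝[>] t,
        1 / 2 < 1 - (z - t) * ∑ a ∈ A, c i a t + (z - t) * m i := by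
      have : Tendsto (fun z => 1 - (z - t) * ∑ a ∈ A, c i a t + (z - t) * m i) (𝓝 t)
          (𝓝 (1 - (t - t) * ∑ a ∈ A, c i a t + (t - t) * m i)) :=
        Continuous.tendsto (by fun_prop) t
      rw [sub_self, zero_mul, zero_mul, sub_zero, add_zero] at this
      exact (this.mono_left nhdsWithin_le_nhds).eventually_const_lt (by norm_num)
    filter_upwards [self_mem_nhdsWithin, hcoef] with z (hz : t < z) hcoef
    have hh : 0 ≤ z - t := (sub_pos.mpr hz).le
    have hstep := norm_euler_step_sub_le (n := n i) A (hc i hi · · t ht) (hφf i hi t)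
      (fun a ha => hφf (σ a i) (hσ a ha i hi) t) hh hcoef.le
    have hmf : (z - t) * m i * f t ≤ (z - t) * (K * f t) := by
      rw [mul_assoc]; gcongr; exact hmK i hi
    linarith
  have hr_pos : 0 < r := (mul_nonneg (Finset.sum_nonneg fun i _ => abs_nonneg (m i))
    (hf_nonneg t)).trans_lt hr
  refine Eventually.frequently ?_
  filter_upwards [self_mem_nhdsWithin, (Filter.eventually_all_finset O).mpr hφ_step]
    with z (hz : t < z) hφz
  have hh : 0 < z - t := sub_pos.mpr hz
  have hfz : f z < f t + (z - t) * r :=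
    max_lt ((Finset.sup'_lt_iff hO).mpr hφz) (by nlinarith [hf_nonneg t])
  rw [inv_mul_lt_iff₀ hh]
  linarith

section

variable {V : Type*} [NormedAddCommGroup V] [InnerProductSpace ℝ V] {D : HOData V}

theorem rRefl_smul (α : V) (t : ℝ) (x : V) : rRefl α (t • x) = t • rRefl α x := by
  simp only [rRefl, real_inner_smul_right, smul_sub, smul_smul]

theorem inner_rRefl (α β y : V) : ⟪β, rRefl α y⟫ = ⟪rRefl α β, y⟫ := by
  simp only [rRefl, coroot, inner_sub_left, inner_sub_right,
    real_inner_smul_right, real_inner_comm]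
  ring

theorem HORegular.smul {x : V} (hx : HORegular D x) {t : ℝ} (ht : t ≠ 0) :
    HORegular D (t • x) := fun α hα => by
  rw [real_inner_smul_right]; exact mul_ne_zero ht (hx α hα)

theorem div_one_sub_exp_neg_mul_nonneg {t : ℝ} (ht : 0 ≤ t) (s : ℝ) :
    0 ≤ s / (1 - Real.exp (-(t * s))) := by
  rcases le_total s 0 with hs | hs
  · refine div_nonneg_of_nonpos hs (sub_nonpos.mpr (Real.one_le_exp_iff.mpr ?_))
    nlinarith
  · refine div_nonneg hs (sub_nonneg.mpr (Real.exp_le_one_iff.mpr ?_))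
    nlinarith

theorem hasDerivAt_comp_smul_const {F : Type*} [NormedAddCommGroup F] [NormedSpace ℝ F]
    {G : V → F} {y : V} {t : ℝ} (hG : DifferentiableAt ℝ G (t • y)) :
    HasDerivAt (fun s : ℝ => G (s • y)) (fderiv ℝ G (t • y) y) t := by
  have hline : HasDerivAt (fun s : ℝ => s • y) y t := by
    simpa using (hasDerivAt_id t).smul_const y
  exact hG.hasFDerivAt.comp_hasDerivAt t hline

theorem IsOpdamC.hasDerivAt_ray {l1 l2 : V} {G : V → ℂ} (hG : IsOpdamC D l1 l2 G) {y : V}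
    (hy : HORegular D y) {t : ℝ} (ht : 0 < t) :
    HasDerivAt (fun s : ℝ => G (s • y))
      (∑ α ∈ D.Rpos, ((D.k α * ⟪α, y⟫ / (1 - Real.exp (-(t * ⟪α, y⟫))) : ℝ) : ℂ)
          * (G (t • rRefl α y) - G (t • y))
        + (((⟪rhoHO D + l1, y⟫ : ℝ) : ℂ) + I * ((⟪l2, y⟫ : ℝ) : ℂ)) * G (t • y)) t := by
  have := hasDerivAt_comp_smul_const (hG.1 (t • y) (mem_univ _)).differentiableAt
  rw [hG.2.2 y _ (hy.smul ht.ne')] at this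
  simpa only [rRefl_smul, real_inner_smul_right] using this

theorem IsOpdamR.hasDerivAt_ray {l : V} {G : V → ℝ} (hG : IsOpdamR D l G) {y : V}
    (hy : HORegular D y) {t : ℝ} (ht : 0 < t) :
    HasDerivAt (fun s : ℝ => G (s • y))
      (∑ α ∈ D.Rpos, D.k α * ⟪α, y⟫ / (1 - Real.exp (-(t * ⟪α, y⟫)))
          * (G (t • rRefl α y) - G (t • y))
        + ⟪rhoHO D + l, y⟫ * G (t • y)) t := by
  have := hasDerivAt_comp_smul_const (hG.1 (t • y) (mem_univ _)).differentiableAt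
  rw [hG.2.2 y _ (hy.smul ht.ne')] at this
  simpa only [rRefl_smul, real_inner_smul_right] using this

namespace HOData

variable (D)

theorem exists_regular : ∃ u : V, HORegular D u := by
  obtain ⟨u, hu⟩ := D.pos_char
  refine ⟨u, fun α hα => ?_⟩
  rcases D.pos_or_neg α hα with hpos | hneg
  · exact ((hu α hα).mp hpos).ne'
  · have := (hu _ (D.neg_mem α hα)).mp hneg
    rw [inner_neg_left] at this
    linarith

theorem dense_setOf_regular : Dense {x : V | HORegular D x} := by
  intro x
  obtain ⟨u, hu⟩ := D.exists_regular
  set T : Finset ℝ := D.R.image fun α => -⟪α, x⟫ / ⟪α, u⟫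
  have hT : MapsTo (fun t : ℝ => x + t • u) (↑T)ᶜ {x | HORegular D x} := by
    intro t ht α hα hzero
    rw [inner_add_right, real_inner_smul_right] at hzero
    refine ht (Finset.mem_image.mpr ⟨α, hα, ?_⟩)
    field_simp [hu α hα]
    linarith
  have h0 : (0 : ℝ) ∈ closure (↑T)ᶜ := (T.countable_toSet.dense_compl ℝ) 0
  simpa using map_mem_closure (by fun_prop) h0 hT

theorem exists_finset_regular_rRefl_mem {x : V} (hx : HORegular D x) :
    ∃ O : Finset V, x ∈ O ∧ (∀ y ∈ O, HORegular D y) ∧ ∀ α ∈ D.R, ∀ y ∈ O, rRefl α y ∈ O := by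
  -- `S` contains the Weyl orbit of `x`; it is finite because a point of `x + span R` is
  -- determined by its root coordinates `⟪β, y⟫`.
  set vals : Finset ℝ := D.R.image fun γ => ⟪γ, x⟫
  set S : Set V := {y | y - x ∈ Submodule.span ℝ (D.R : Set V) ∧ ∀ β ∈ D.R, ⟪β, y⟫ ∈ vals}
  set coords : V → D.R → ℝ := fun y β => ⟪(β : V), y⟫
  have hinj : InjOn coords S := by
    intro y₁ hy₁ y₂ hy₂ h
    have hspan : y₁ - y₂ ∈ Submodule.span ℝ (D.R : Set V) := by
      simpa using Submodule.sub_mem _ hy₁.1 hy₂.1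
    have hortho : Submodule.span ℝ (D.R : Set V) ⟂ ℝ ∙ (y₁ - y₂) :=
      Submodule.isOrtho_span.mpr fun β hβ _ hd => by
        rw [Set.mem_singleton_iff.mp hd, inner_sub_right, sub_eq_zero]
        exact congrFun h ⟨β, hβ⟩
    exact sub_eq_zero.mp (Submodule.disjoint_def.mp hortho.disjoint _ hspan
      (Submodule.mem_span_singleton_self _))
  have hfin : S.Finite := by
    refine Set.Finite.of_finite_image ((Set.Finite.pi' fun _ => vals.finite_toSet).subset ?_)
      hinj
    rintro _ ⟨y, hy, rfl⟩ β
    exact hy.2 β β.2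
  refine ⟨hfin.toFinset, ?_, ?_, ?_⟩ <;> simp only [Set.Finite.mem_toFinset]
  · exact ⟨by simp, fun β hβ => Finset.mem_image_of_mem _ hβ⟩
  · intro y hy β hβ
    obtain ⟨γ, hγ, hγy⟩ := Finset.mem_image.mp (hy.2 β hβ)
    rw [← hγy]
    exact hx γ hγ
  · intro α hα y hy
    refine ⟨?_, fun β hβ => ?_⟩
    · rw [rRefl, sub_right_comm]
      exact Submodule.sub_mem _ hy.1 (Submodule.smul_mem _ _ (Submodule.subset_span hα))
    · rw [inner_rRefl]
      exact hy.2 _ (D.refl_mem α hα β hβ)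

end HOData

theorem norm_le_of_isOpdam_of_regular {l1 l2 : V} {G : V → ℂ} {Gre : V → ℝ}
    (hG : IsOpdamC D l1 l2 G) (hGre : IsOpdamR D l1 Gre) {x : V} (hx : HORegular D x) :
    ‖G x‖ ≤ Gre x := by
  obtain ⟨O, hxO, hreg, hstable⟩ := D.exists_finset_regular_rRefl_mem hx
  have hray := norm_le_of_hasDerivAt_system (O := O) (σ := rRefl)
    (u := fun y t => G (t • y)) (v := fun y t => Gre (t • y))
    (fun α hα y hy => hstable α (D.pos_subset hα) y hy)
    (fun y _ α hα t ht => mul_div_assoc (D.k α) _ _ ▸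
      mul_nonneg (D.k_pos α (D.pos_subset hα)).le (div_one_sub_exp_neg_mul_nonneg ht.1.le _))
    (fun y _ => by simp [hG.2.1, hGre.2.1])
    (fun y _ => (hG.1.continuous.comp (continuous_id.smul continuous_const)).continuousOn)
    (fun y _ => (hGre.1.continuous.comp (continuous_id.smul continuous_const)).continuousOn)
    (fun y hy t ht => hG.hasDerivAt_ray (hreg y hy) ht.1)
    (fun y hy t ht => hGre.hasDerivAt_ray (hreg y hy) ht.1)
  simpa using hray x hxO

end

/-- for every `λ ∈ h` and every `x ∈ a`, `|G_λ(x)| ≤ G_{Re λ}(x)`. -/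
theorem statement1 (D : HOData E) (l1 l2 : E) (G : E → ℂ) (Gre : E → ℝ)
    (hG : IsOpdamC D l1 l2 G) (hGre : IsOpdamR D l1 Gre) :
    ∀ x : E, ‖G x‖ ≤ Gre x := by
  have hclosed : IsClosed {x | ‖G x‖ ≤ Gre x} := isClosed_le hG.1.continuous.norm hGre.1.continuous
  intro x
  exact hclosed.closure_subset_iff.mpr (fun y hy => norm_le_of_isOpdam_of_regular hG hGre hy)
    (D.dense_setOf_regular x)
end
end

section
/- For every λ ∈ a and every x in the closed positive Weyl chamber ā₊, the gradient of F_λ satisfies ∇F_λ(x) = −|W|^{−1} Σ_{w∈W} w^{−1}(ρ − λ) · G_λ(w x) (an identity of vectors in a). In particular |∇F_λ(x)| ≤ (|ρ| + |λ|) · F_λ(x). -/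
open scoped BigOperators RealInnerProductSpace Classical

noncomputable section

variable {E : Type*} [NormedAddCommGroup E] [InnerProductSpace ℝ E] [FiniteDimensional ℝ E]

/-!
At a regular point the Cherednik system expresses `∂_ξ G(wx)` through the values `G(r_α wx)`.
Summing over `W` and pairing `w` with `r_α w`, the difference terms collapse because
`1/(1 - e^t) + 1/(1 - e^{-t}) = 1`, leaving `∂_ξ F(x) = |W|⁻¹ Σ_w (λ - ρ, wξ) G(wx)`; this
extends to every `x` by density of the regular points. The norm bound then only needs `G ≥ 0`,
which follows from a comparison argument for the same system restricted to the rays through the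
`W`-orbit of a regular point.
-/

open Set Filter Topology

lemma one_sub_exp_ne_zero {t : ℝ} (ht : t ≠ 0) : 1 - Real.exp t ≠ 0 :=
  sub_ne_zero.2 (Ne.symm (mt (Real.exp_eq_one_iff t).1 ht))

lemma one_div_one_sub_exp_add_one_div_one_sub_exp_neg {t : ℝ} (ht : t ≠ 0) :
    1 / (1 - Real.exp t) + 1 / (1 - Real.exp (-t)) = 1 := by
  have h₁ := one_sub_exp_ne_zero ht
  have h₂ : Real.exp t - 1 ≠ 0 := fun h => h₁ (by linear_combination -h)
  rw [Real.exp_neg]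
  field_simp
  ring

lemma div_one_sub_exp_neg_mul_pos {σ s : ℝ} (hσ : σ ≠ 0) (hs : 0 < s) :
    0 < σ / (1 - Real.exp (-(s * σ))) := by
  rcases hσ.lt_or_gt with hσ | hσ
  · refine div_pos_of_neg_of_neg hσ (sub_neg.2 (Real.one_lt_exp_iff.2 ?_))
    nlinarith
  · refine div_pos hσ (sub_pos.2 (Real.exp_lt_one_iff.2 ?_))
    nlinarith

lemma pos_of_hasDerivAt_of_neg_mul_le {u u' : ℝ → ℝ} {a b K : ℝ} (hab : a ≤ b)
    (hcont : ContinuousOn u (Icc a b)) (hderiv : ∀ s ∈ Ioo a b, HasDerivAt u (u' s) s)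
    (hbound : ∀ s ∈ Ioo a b, -K * u s ≤ u' s) (ha : 0 < u a) : 0 < u b := by
  have hderiv' : ∀ s ∈ Ioo a b, HasDerivAt (fun s => Real.exp (K * s) * u s)
      (Real.exp (K * s) * (K * 1) * u s + Real.exp (K * s) * u' s) s := fun s hs =>
    ((hasDerivAt_id s).const_mul K).exp.mul (hderiv s hs)
  have hmono : MonotoneOn (fun s => Real.exp (K * s) * u s) (Icc a b) := by
    refine monotoneOn_of_deriv_nonneg (convex_Icc a b)
      ((by fun_prop : Continuous fun s => Real.exp (K * s)).continuousOn.mul hcont) ?_ ?_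
    · rw [interior_Icc]
      exact fun s hs => (hderiv' s hs).differentiableAt.differentiableWithinAt
    · rw [interior_Icc]
      intro s hs
      rw [(hderiv' s hs).deriv]
      nlinarith [mul_nonneg (Real.exp_pos (K * s)).le (by linarith [hbound s hs] :
        0 ≤ K * u s + u' s)]
  have hle := hmono ⟨le_rfl, hab⟩ ⟨hab, le_rfl⟩ hab
  exact pos_of_mul_pos_right ((mul_pos (Real.exp_pos _) ha).trans_le hle) (Real.exp_pos _).le

/-- At the first time a component vanishes, Grönwall's inequality for that component fails. -/
lemma forall_pos_of_hasDerivAt_of_neg_mul_le {ι : Type*} [Finite ι] {u u' : ι → ℝ → ℝ}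
    {K : ι → ℝ} {a b : ℝ} (hcont : ∀ i, ContinuousOn (u i) (Icc a b))
    (hderiv : ∀ i, ∀ s ∈ Ioo a b, HasDerivAt (u i) (u' i s) s)
    (hbound : ∀ s ∈ Ioo a b, (∀ j, 0 < u j s) → ∀ i, -K i * u i s ≤ u' i s)
    (ha : ∀ i, 0 < u i a) (i : ι) {t : ℝ} (ht : t ∈ Icc a b) : 0 < u i t := by
  by_contra! hneg
  have hcompact : IsCompact (⋃ j, Icc a b ∩ u j ⁻¹' Iic 0) := isCompact_iUnion fun j =>
    isCompact_Icc.of_isClosed_subset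
      ((hcont j).preimage_isClosed_of_isClosed isClosed_Icc isClosed_Iic) inter_subset_left
  obtain ⟨t₁, ht₁, hleast⟩ := hcompact.exists_isLeast ⟨t, mem_iUnion.2 ⟨i, ht, hneg⟩⟩
  obtain ⟨j, ⟨hat₁, ht₁b⟩, hj⟩ := mem_iUnion.1 ht₁
  have hat₁ : a < t₁ := hat₁.lt_of_ne (by rintro rfl; exact (ha j).not_ge hj)
  have hsub : Ioo a t₁ ⊆ Ioo a b := Ioo_subset_Ioo_right ht₁b
  refine (pos_of_hasDerivAt_of_neg_mul_le hat₁.le ((hcont j).mono (Icc_subset_Icc_right ht₁b))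
    (fun s hs => hderiv j s (hsub hs)) (fun s hs => hbound s (hsub hs) ?_ j) (ha j)).not_ge hj
  exact fun k => not_le.1 fun hk =>
    hs.2.not_ge (hleast (mem_iUnion.2 ⟨k, ⟨hs.1.le, hs.2.le.trans ht₁b⟩, hk⟩))

section

omit [FiniteDimensional ℝ E]

lemma rRefl_eq_reflection (α : E) : rRefl α = (ℝ ∙ α)ᗮ.reflection := by
  ext x
  rw [Submodule.reflection_orthogonal_apply, Submodule.reflection_singleton_apply, rRefl, coroot,
    real_inner_smul_left, real_inner_self_eq_norm_sq]
  simp only [RCLike.ofReal_real_eq_id, id]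
  module

lemma rRefl_rRefl (α x : E) : rRefl α (rRefl α x) = x := by
  simp only [rRefl_eq_reflection, Submodule.reflection_reflection]

lemma inner_rRefl_right (α x : E) : ⟪α, rRefl α x⟫ = -⟪α, x⟫ := by
  rw [rRefl_eq_reflection, ← LinearIsometryEquiv.inner_map_map (ℝ ∙ α)ᗮ.reflection,
    Submodule.reflection_reflection, Submodule.reflection_orthogonalComplement_singleton_eq_neg,
    inner_neg_left]

lemma dense_setOf_inner_ne_zero {α : E} (hα : α ≠ 0) : Dense {x : E | ⟪α, x⟫ ≠ 0} := by
  rw [show {x : E | ⟪α, x⟫ ≠ 0} = {x | ⟪α, x⟫ = 0}ᶜ from rfl, ← interior_eq_empty_iff_dense_compl]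
  by_contra h
  have hker : (LinearMap.ker (innerₛₗ ℝ α) : Set E) = {x | ⟪α, x⟫ = 0} := by ext; simp
  have htop := (LinearMap.ker (innerₛₗ ℝ α)).eq_top_of_nonempty_interior'
    (hker ▸ Set.nonempty_iff_ne_empty.2 h)
  have : α ∈ LinearMap.ker (innerₛₗ ℝ α) := htop ▸ Submodule.mem_top
  exact hα (inner_self_eq_zero.1 this)

lemma inner_rhoHO (D : HOData E) (v : E) :
    ⟪rhoHO D, v⟫ = 2⁻¹ * ∑ α ∈ D.Rpos, D.k α * ⟪α, v⟫ := by
  simp only [rhoHO, real_inner_smul_left, sum_inner]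

/-- Pair `w` with `r_α w`: their terms share the factor `f (w x)`. -/
lemma sum_reflection_difference_eq {W : Subgroup (E ≃ₗᵢ[ℝ] E)} [Fintype W] {α : E}
    (hα : (ℝ ∙ α)ᗮ.reflection ∈ W) (f : E → ℝ) (c : ℝ) {x : E}
    (hx : ∀ w : W, ⟪α, w.1 x⟫ ≠ 0) (ξ : E) :
    ∑ w : W, c * ⟪α, w.1 ξ⟫ / (1 - Real.exp (-⟪α, w.1 x⟫)) * (f (rRefl α (w.1 x)) - f (w.1 x))
      = ∑ w : W, -(c * ⟪α, w.1 ξ⟫) * f (w.1 x) := by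
  have hreindex := Equiv.sum_comp (Equiv.mulLeft (⟨_, hα⟩ : W)) fun w : W =>
    c * ⟪α, w.1 ξ⟫ / (1 - Real.exp (-⟪α, w.1 x⟫)) * f (rRefl α (w.1 x))
  simp only [Equiv.coe_mulLeft, Subgroup.coe_mul, LinearIsometryEquiv.coe_mul, Function.comp_apply,
    ← rRefl_eq_reflection, inner_rRefl_right, rRefl_rRefl, neg_neg] at hreindex
  simp only [mul_sub]
  rw [Finset.sum_sub_distrib, ← hreindex, ← Finset.sum_sub_distrib]
  refine Finset.sum_congr rfl fun w _ => ?_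
  linear_combination (-(c * ⟪α, w.1 ξ⟫) * f (w.1 x)) *
    one_div_one_sub_exp_add_one_div_one_sub_exp_neg (hx w)

variable {D : HOData E}

lemma reflection_mem_weylGroup {α : E} (hα : α ∈ D.R) : (ℝ ∙ α)ᗮ.reflection ∈ weylGroup D :=
  Subgroup.subset_closure ⟨α, hα, fun x => by rw [rRefl_eq_reflection]⟩

lemma apply_mem_R_of_mem_weylGroup {w : E ≃ₗᵢ[ℝ] E} (hw : w ∈ weylGroup D) {α : E}
    (hα : α ∈ D.R) : w α ∈ D.R := by
  induction hw using Subgroup.closure_induction'' generalizing α with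
  | mem w hw =>
    obtain ⟨β, hβ, hwβ⟩ := hw
    rw [hwβ]
    exact D.refl_mem β hβ α hα
  | inv_mem w hw =>
    obtain ⟨β, hβ, hwβ⟩ := hw
    rw [show w⁻¹ α = rRefl β α by
      rw [show w⁻¹ α = w.symm α from rfl, LinearIsometryEquiv.symm_apply_eq, hwβ, rRefl_rRefl]]
    exact D.refl_mem β hβ α hα
  | one => exact hα
  | mul w v _ _ hw hv => exact hw (hv hα)

lemma HORegular.weylGroup_apply {x : E} (hx : HORegular D x) {w : E ≃ₗᵢ[ℝ] E}
    (hw : w ∈ weylGroup D) : HORegular D (w x) := by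
  intro α hα
  rw [← w.apply_symm_apply α, LinearIsometryEquiv.inner_map_map]
  exact hx _ (apply_mem_R_of_mem_weylGroup (inv_mem hw) hα)

lemma HORegular.smul_s5 {x : E} (hx : HORegular D x) {s : ℝ} (hs : s ≠ 0) : HORegular D (s • x) :=
  fun α hα => by rw [real_inner_smul_right]; exact mul_ne_zero hs (hx α hα)

lemma HORegular.exists_forall_sum_div_one_sub_exp_le {z : E} (hz : HORegular D z) {a b : ℝ}
    (ha : 0 < a) : ∃ K, ∀ s ∈ Icc a b,
      ∑ α ∈ D.Rpos, D.k α * ⟪α, z⟫ / (1 - Real.exp (-⟪α, s • z⟫)) ≤ K := by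
  have hcont : ContinuousOn (fun s : ℝ =>
      ∑ α ∈ D.Rpos, D.k α * ⟪α, z⟫ / (1 - Real.exp (-⟪α, s • z⟫))) (Icc a b) :=
    continuousOn_finsetSum _ fun α hα => continuousOn_const.div (by fun_prop) fun s hs =>
      one_sub_exp_ne_zero (neg_ne_zero.2 (hz.smul_s5 (ha.trans_le hs.1).ne' α (D.pos_subset hα)))
  obtain ⟨K, hK⟩ := isCompact_Icc.bddAbove_image hcont
  exact ⟨K, fun s hs => hK (mem_image_of_mem _ hs)⟩

variable {lam : E} {G : E → ℝ}

lemma IsOpdamR.neg_mul_le_fderiv_smul (hG : IsOpdamR D lam G) {z : E} (hz : HORegular D z)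
    {s K : ℝ} (hs : 0 < s) (hrefl : ∀ α ∈ D.Rpos, 0 ≤ G (rRefl α (s • z))) (hGs : 0 ≤ G (s • z))
    (hK : ∑ α ∈ D.Rpos, D.k α * ⟪α, z⟫ / (1 - Real.exp (-⟪α, s • z⟫)) ≤ K) :
    -(K - ⟪rhoHO D + lam, z⟫) * G (s • z) ≤ fderiv ℝ G (s • z) z := by
  rw [hG.2.2 z (s • z) (hz.smul_s5 hs.ne')]
  have hterm : ∀ α ∈ D.Rpos, D.k α * ⟪α, z⟫ / (1 - Real.exp (-⟪α, s • z⟫)) * -G (s • z) ≤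
      D.k α * ⟪α, z⟫ / (1 - Real.exp (-⟪α, s • z⟫)) * (G (rRefl α (s • z)) - G (s • z)) := by
    intro α hα
    have hαR := D.pos_subset hα
    have hc : 0 < D.k α * ⟪α, z⟫ / (1 - Real.exp (-⟪α, s • z⟫)) := by
      rw [mul_div_assoc, real_inner_smul_right]
      exact mul_pos (D.k_pos α hαR) (div_one_sub_exp_neg_mul_pos (hz α hαR) hs)
    exact mul_le_mul_of_nonneg_left (by linarith [hrefl α hα]) hc.le
  have hsum := Finset.sum_le_sum hterm
  rw [← Finset.sum_mul] at hsum
  linarith [mul_le_mul_of_nonneg_right hK hGs]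

/-- Along each ray `s ↦ s • w y`, `G` satisfies a linear differential inequality whose
coefficients in front of the other values `G (s • r_α w y)` are positive; so positivity near
`s = 0`, where `G = 1`, propagates to `s = 1`. -/
lemma IsOpdamR.pos_of_regular [Fintype (weylGroup D)] (hG : IsOpdamR D lam G) {y : E}
    (hy : HORegular D y) : 0 < G y := by
  have hGc : Continuous G := (hG.1.contDiff (n := 0)).continuous
  have hGd : Differentiable ℝ G := hG.1.contDiff.differentiable one_ne_zero
  obtain ⟨ε, ⟨hε0, hε1⟩, hεpos⟩ : ∃ ε ∈ Ioo (0 : ℝ) 1, ∀ w : weylGroup D, 0 < G (ε • w.1 y) := by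
    have hnear : ∀ᶠ s in 𝓝 (0 : ℝ), ∀ w : weylGroup D, 0 < G (s • w.1 y) :=
      eventually_all.2 fun w => continuousAt_const.eventually_lt (by fun_prop) (by simp [hG.2.1])
    obtain ⟨ε, hε, hεIoo⟩ := ((hnear.filter_mono nhdsWithin_le_nhds).and
      (Ioo_mem_nhdsGT one_pos)).exists
    exact ⟨ε, hεIoo, hε⟩
  choose K hK using fun w : weylGroup D =>
    (hy.weylGroup_apply w.2).exists_forall_sum_div_one_sub_exp_le (b := 1) hε0
  have hray := forall_pos_of_hasDerivAt_of_neg_mul_le (u := fun w s => G (s • w.1 y))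
    (u' := fun w s => fderiv ℝ G (s • w.1 y) (w.1 y)) (K := fun w => K w - ⟪rhoHO D + lam, w.1 y⟫)
    (fun w => by fun_prop)
    (fun w s _ => by
      have h := (hGd _).hasFDerivAt.comp_hasDerivAt s ((hasDerivAt_id s).smul_const (w.1 y))
      rwa [one_smul] at h)
    (fun s hs hpos w => ?_) hεpos 1 ⟨hε1.le, le_rfl⟩
  · simpa using hray
  have hrefl : ∀ α ∈ D.Rpos, 0 ≤ G (rRefl α (s • w.1 y)) := fun α hα => by
    rw [rRefl_eq_reflection, map_smul]
    exact (hpos ⟨_, mul_mem (reflection_mem_weylGroup (D.pos_subset hα)) w.2⟩).le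
  exact hG.neg_mul_le_fderiv_smul (hy.weylGroup_apply w.2) (hε0.trans hs.1) hrefl (hpos w).le
    (hK w s (Ioo_subset_Icc_self hs))

variable [Fintype (weylGroup D)]

lemma contDiff_Fsym (hG : ContDiff ℝ 1 G) : ContDiff ℝ 1 (Fsym D G) :=
  contDiff_const.mul (ContDiff.sum fun w _ => hG.comp w.1.contDiff)

lemma fderiv_Fsym_apply (hG : Differentiable ℝ G) (x ξ : E) :
    fderiv ℝ (Fsym D G) x ξ = (Fintype.card (weylGroup D) : ℝ)⁻¹ *
      ∑ w : weylGroup D, fderiv ℝ G (w.1 x) (w.1 ξ) := by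
  have hsum : HasFDerivAt (fun y => ∑ w : weylGroup D, G (w.1 y))
      (∑ w : weylGroup D, (fderiv ℝ G (w.1 x)).comp (w.1 : E →L[ℝ] E)) x :=
    HasFDerivAt.fun_sum fun w _ => (hG _).hasFDerivAt.comp x (w.1 : E →L[ℝ] E).hasFDerivAt
  have hF : HasFDerivAt (Fsym D G) ((Fintype.card (weylGroup D) : ℝ)⁻¹ •
      ∑ w : weylGroup D, (fderiv ℝ G (w.1 x)).comp (w.1 : E →L[ℝ] E)) x :=
    hsum.const_mul _
  rw [hF.fderiv]
  simp

lemma IsOpdamR.fderiv_Fsym_of_regular (hG : IsOpdamR D lam G) {x : E} (hx : HORegular D x)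
    (ξ : E) : fderiv ℝ (Fsym D G) x ξ = (Fintype.card (weylGroup D) : ℝ)⁻¹ *
      ∑ w : weylGroup D, ⟪lam - rhoHO D, w.1 ξ⟫ * G (w.1 x) := by
  have hcancel : ∀ α ∈ D.Rpos, ∑ w : weylGroup D, D.k α * ⟪α, w.1 ξ⟫ /
      (1 - Real.exp (-⟪α, w.1 x⟫)) * (G (rRefl α (w.1 x)) - G (w.1 x)) =
      ∑ w : weylGroup D, -(D.k α * ⟪α, w.1 ξ⟫) * G (w.1 x) := fun α hα =>
    sum_reflection_difference_eq (reflection_mem_weylGroup (D.pos_subset hα)) G _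
      (fun w => hx.weylGroup_apply w.2 α (D.pos_subset hα)) ξ
  rw [fderiv_Fsym_apply (hG.1.contDiff.differentiable one_ne_zero),
    Finset.sum_congr rfl fun w _ => hG.2.2 (w.1 ξ) (w.1 x) (hx.weylGroup_apply w.2),
    Finset.sum_add_distrib, Finset.sum_comm, Finset.sum_congr rfl hcancel, Finset.sum_comm,
    ← Finset.sum_add_distrib]
  congr 1
  refine Finset.sum_congr rfl fun w _ => ?_
  rw [← Finset.sum_mul, inner_sub_left, inner_add_left, inner_rhoHO, Finset.sum_neg_distrib]
  ring

end

lemma HOData.dense_regular (D : HOData E) : Dense {x : E | HORegular D x} := by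
  have : {x : E | HORegular D x} = ⋂ α ∈ (D.R : Set E), {x | ⟪α, x⟫ ≠ 0} := by
    ext x; simp [HORegular]
  rw [this]
  exact dense_biInter_of_isOpen (fun α _ => isOpen_ne_fun (by fun_prop) (by fun_prop))
    D.R.countable_toSet (fun α hα => dense_setOf_inner_ne_zero (D.root_ne_zero α hα))

section

variable {D : HOData E} [Fintype (weylGroup D)] {lam : E} {G : E → ℝ}

lemma IsOpdamR.nonneg (hG : IsOpdamR D lam G) (x : E) : 0 ≤ G x :=
  closure_minimal (fun _ hy => (hG.pos_of_regular hy).le)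
    (isClosed_le continuous_const (hG.1.contDiff (n := 0)).continuous) (D.dense_regular x)

lemma IsOpdamR.gradient_Fsym_of_regular (hG : IsOpdamR D lam G) {x : E} (hx : HORegular D x) :
    gradient (Fsym D G) x = -((Fintype.card (weylGroup D) : ℝ)⁻¹ •
      ∑ w : weylGroup D, G (w.1 x) • w.1.symm (rhoHO D - lam)) := by
  refine ext_inner_right ℝ fun ξ => ?_
  rw [inner_gradient_left, hG.fderiv_Fsym_of_regular hx, inner_neg_left, real_inner_smul_left,
    sum_inner, Finset.mul_sum, Finset.mul_sum, ← Finset.sum_neg_distrib]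
  refine Finset.sum_congr rfl fun w _ => ?_
  rw [real_inner_smul_left, LinearIsometryEquiv.inner_map_eq_flip, LinearIsometryEquiv.symm_symm,
    ← neg_sub, inner_neg_left]
  ring

lemma IsOpdamR.gradient_Fsym (hG : IsOpdamR D lam G) (x : E) :
    gradient (Fsym D G) x = -((Fintype.card (weylGroup D) : ℝ)⁻¹ •
      ∑ w : weylGroup D, G (w.1 x) • w.1.symm (rhoHO D - lam)) := by
  have hGc : Continuous G := (hG.1.contDiff (n := 0)).continuous
  have hgrad : Continuous (gradient (Fsym D G)) :=
    (InnerProductSpace.toDual ℝ E).symm.continuous.comp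
      ((contDiff_Fsym hG.1.contDiff).continuous_fderiv one_ne_zero)
  refine congrFun (Continuous.ext_on D.dense_regular hgrad ?_
    fun y hy => hG.gradient_Fsym_of_regular hy) x
  fun_prop

lemma IsOpdamR.norm_gradient_Fsym_le (hG : IsOpdamR D lam G) (x : E) :
    ‖gradient (Fsym D G) x‖ ≤ ‖rhoHO D - lam‖ * Fsym D G x := by
  rw [hG.gradient_Fsym x, norm_neg, norm_smul, Real.norm_of_nonneg (by positivity), Fsym,
    mul_left_comm, Finset.mul_sum]
  refine mul_le_mul_of_nonneg_left ((norm_sum_le _ _).trans_eq ?_) (by positivity)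
  refine Finset.sum_congr rfl fun w _ => ?_
  rw [norm_smul, Real.norm_of_nonneg (hG.nonneg _), LinearIsometryEquiv.norm_map, mul_comm]

end

theorem statement5_general (D : HOData E) [Fintype (weylGroup D)] (lam : E) (G : E → ℝ)
    (hG : IsOpdamR D lam G) (x : E) :
    gradient (Fsym D G) x
      = -((Fintype.card (weylGroup D) : ℝ)⁻¹ •
          ∑ w : weylGroup D, G (w.1 x) • (w.1.symm (rhoHO D - lam)))
    ∧ ‖gradient (Fsym D G) x‖ ≤ (‖rhoHO D‖ + ‖lam‖) * Fsym D G x := by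
  refine ⟨hG.gradient_Fsym x, (hG.norm_gradient_Fsym_le x).trans ?_⟩
  gcongr
  · exact mul_nonneg (by positivity) (Finset.sum_nonneg fun w _ => hG.nonneg _)
  · exact norm_sub_le _ _

/-- for `λ ∈ a` and `x ∈ ā₊`,
`∇F_λ(x) = -|W|⁻¹ Σ_{w ∈ W} w⁻¹(ρ - λ) G_λ(wx)`, and consequently
`|∇F_λ(x)| ≤ (|ρ| + |λ|) F_λ(x)`. -/
theorem statement5 (D : HOData E) [Fintype (weylGroup D)] (lam : E) (G : E → ℝ)
    (hG : IsOpdamR D lam G) (x : E) (hx : x ∈ closure (posChamber D)) :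
    gradient (Fsym D G) x
      = -((Fintype.card (weylGroup D) : ℝ)⁻¹ •
          ∑ w : weylGroup D, G (w.1 x) • (w.1.symm (rhoHO D - lam)))
    ∧ ‖gradient (Fsym D G) x‖ ≤ (‖rhoHO D‖ + ‖lam‖) * Fsym D G x :=
  statement5_general D lam G hG x
end
end
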